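/- The constant function 1 satisfies 𝓛1 = 0, and for every integer ℓ ≥ 1 the functions φ(x) = cos(2πℓx) and φ(x) = sin(2πℓx) satisfy 𝓛φ = λ_ℓ φ, where λ_ℓ = 4Kκ − p − (2K/(πℓ))·sin(2πℓκ). Thus 0 is an eigenvalue of 𝓛 with eigenfunction 1, and each λ_ℓ is an eigenvalue with eigenfunctions cos(2πℓx) and sin(2πℓx). -/
import Mathlib


open MeasureTheory Real Set

noncomputable section

/-- The graphon of the `κ`-nearest neighbor graph. -/
def W2 (κ : ℝ) (x y : ℝ) : ℝ := if |x - y| ≤ κ ∨ 1 - κ ≤ |x - y| then 1 else 0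

/-- The linearization `𝓛` of the continuum limit about the stationary solution `u ≡ 0`:
`(𝓛φ)(x) = ∫₀¹ (p - 2K·W₂(x,y))(φ(y) - φ(x)) dy`. -/
def Lop (p K κ : ℝ) (φ : ℝ → ℝ) (x : ℝ) : ℝ :=
  ∫ y in Set.Icc (0:ℝ) 1, (p - 2 * K * W2 κ x y) * (φ y - φ x)


lemma W2_mul (κ x : ℝ) (φ : ℝ → ℝ) (y : ℝ) :
    W2 κ x y * φ y = ({y : ℝ | |x - y| ≤ κ ∨ 1 - κ ≤ |x - y|}).indicator φ y := by
  unfold W2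
  by_cases h : |x - y| ≤ κ ∨ 1 - κ ≤ |x - y| <;> simp [h, Set.indicator]

lemma hE_meas (κ x : ℝ) : MeasurableSet {y : ℝ | |x - y| ≤ κ ∨ 1 - κ ≤ |x - y|} := by
  have habs : Continuous (fun y : ℝ => |x - y|) := by continuity
  exact ((isClosed_le habs continuous_const).union
    (isClosed_le continuous_const habs)).measurableSet

lemma key (κ : ℝ) (hκ0 : 0 < κ) (hκ : κ < 1/2) (f : ℝ → ℝ) (hf : Continuous f)
    (hper : Function.Periodic f 1) (x : ℝ) (hx : x ∈ Icc (0:ℝ) 1) :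
    ∫ y in Icc (0:ℝ) 1, W2 κ x y * f y = ∫ y in (x - κ)..(x + κ), f y := by
  obtain ⟨hx0, hx1⟩ := hx
  set E := {y : ℝ | |x - y| ≤ κ ∨ 1 - κ ≤ |x - y|} with hEdef
  have hmeas := hE_meas κ x
  have hstep : ∫ y in Icc (0:ℝ) 1, W2 κ x y * f y = ∫ y in Icc (0:ℝ) 1 ∩ E, f y := by
    simp only [W2_mul κ x f]
    exact setIntegral_indicator hmeas
  rw [hstep]
  have hIcc : ∀ a b : ℝ, a ≤ b → ∫ y in Icc a b, f y = ∫ y in a..b, f y := by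
    intro a b hab
    rw [integral_Icc_eq_integral_Ioc, intervalIntegral.integral_of_le hab]
  have hintf : ∀ a b : ℝ, IntervalIntegrable f volume a b := fun a b =>
    hf.intervalIntegrable a b
  rcases lt_or_ge x κ with hc1 | hc1
  · -- x < κ : E ∩ [0,1] = [0, x+κ] ∪ [x+1-κ, 1]
    have hset : Icc (0:ℝ) 1 ∩ E = Icc 0 (x + κ) ∪ Icc (x + 1 - κ) 1 := by
      ext y
      simp only [hEdef, Set.mem_inter_iff, Set.mem_Icc, Set.mem_setOf_eq, Set.mem_union,
        abs_le, abs_sub_le_iff, le_abs, abs_sub_comm, neg_sub]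
      constructor
      · rintro ⟨⟨hy0, hy1⟩, h⟩
        rcases h with ⟨h1, h2⟩ | (h | h)
        · left; exact ⟨hy0, by linarith⟩
        · exact absurd h (by linarith)
        · right; exact ⟨by linarith, hy1⟩
      · rintro (⟨hy0, hy1⟩ | ⟨hy0, hy1⟩)
        · exact ⟨⟨hy0, by linarith⟩, Or.inl ⟨by linarith, by linarith⟩⟩
        · exact ⟨⟨by linarith, hy1⟩, Or.inr (Or.inr (by linarith))⟩
    rw [hset, setIntegral_union ?disj measurableSet_Icc
        (hf.integrableOn_Icc) (hf.integrableOn_Icc)]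
    case disj =>
      rw [Set.disjoint_left]
      intro y hy1 hy2
      rw [Set.mem_Icc] at hy1 hy2
      linarith [hy1.2, hy2.1]
    rw [hIcc 0 (x + κ) (by linarith), hIcc (x + 1 - κ) 1 (by linarith)]
    have hshift : ∫ y in (x + 1 - κ)..(1:ℝ), f y = ∫ y in (x - κ)..(0:ℝ), f y := by
      have h := intervalIntegral.integral_comp_add_right (a := x - κ) (b := 0) f 1
      simp only [hper _] at h
      rw [h]; norm_num; ring_nf
    rw [hshift, add_comm]
    exact intervalIntegral.integral_add_adjacent_intervals (hintf _ _) (hintf _ _)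
  rcases le_or_gt x (1 - κ) with hc2 | hc2
  · -- middle case
    have haeq : (Icc (0:ℝ) 1 ∩ E : Set ℝ) =ᵐ[volume] Icc (x - κ) (x + κ) := by
      rw [MeasureTheory.ae_eq_set]
      have hsub1 : (Icc (0:ℝ) 1 ∩ E) \ Icc (x - κ) (x + κ) ⊆ ({0, 1} : Set ℝ) := by
        intro y hy
        obtain ⟨⟨⟨hy0, hy1⟩, hE⟩, hnot⟩ := hy
        rw [Set.mem_Icc, not_and_or, not_le, not_le] at hnot
        simp only [hEdef, Set.mem_setOf_eq, abs_le, abs_sub_le_iff, le_abs, neg_sub] at hE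
        by_contra hy01
        simp only [Set.mem_insert_iff, Set.mem_singleton_iff, not_or] at hy01
        obtain ⟨h0, h1⟩ := hy01
        have hy0' : 0 < y := lt_of_le_of_ne hy0 (Ne.symm h0)
        have hy1' : y < 1 := lt_of_le_of_ne hy1 h1
        rcases hE with ⟨ha, hb⟩ | (h | h)
        · rcases hnot with h | h <;> linarith
        · linarith
        · linarith
      have hsub2 : Icc (x - κ) (x + κ) \ (Icc (0:ℝ) 1 ∩ E) ⊆ (∅ : Set ℝ) := by
        intro y hy
        obtain ⟨⟨hy0, hy1⟩, hnot⟩ := hy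
        exfalso; apply hnot
        refine ⟨⟨by linarith, by linarith⟩, Or.inl ?_⟩
        rw [abs_le]; constructor <;> linarith
      constructor
      · exact measure_mono_null hsub1 ((Set.toFinite _).measure_zero volume)
      · exact measure_mono_null hsub2 (by simp)
    rw [setIntegral_congr_set haeq, hIcc _ _ (by linarith)]
  · -- x > 1 - κ
    have hset : Icc (0:ℝ) 1 ∩ E = Icc 0 (x + κ - 1) ∪ Icc (x - κ) 1 := by
      ext y
      simp only [hEdef, Set.mem_inter_iff, Set.mem_Icc, Set.mem_setOf_eq, Set.mem_union,
        abs_le, abs_sub_le_iff, le_abs, neg_sub]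
      constructor
      · rintro ⟨⟨hy0, hy1⟩, h⟩
        rcases h with ⟨h1, h2⟩ | (h | h)
        · right; exact ⟨by linarith, hy1⟩
        · left; exact ⟨hy0, by linarith⟩
        · exact absurd h (by linarith)
      · rintro (⟨hy0, hy1⟩ | ⟨hy0, hy1⟩)
        · exact ⟨⟨hy0, by linarith⟩, Or.inr (Or.inl (by linarith))⟩
        · exact ⟨⟨by linarith, hy1⟩, Or.inl ⟨by linarith, by linarith⟩⟩
    rw [hset, setIntegral_union ?disj2 measurableSet_Icc
        (hf.integrableOn_Icc) (hf.integrableOn_Icc)]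
    case disj2 =>
      rw [Set.disjoint_left]
      intro y hy1 hy2
      rw [Set.mem_Icc] at hy1 hy2
      linarith [hy1.2, hy2.1]
    rw [hIcc 0 (x + κ - 1) (by linarith), hIcc (x - κ) 1 (by linarith)]
    have hshift : ∫ y in (0:ℝ)..(x + κ - 1), f y = ∫ y in (1:ℝ)..(x + κ), f y := by
      have h := intervalIntegral.integral_comp_add_right (a := (0:ℝ)) (b := x + κ - 1) f 1
      simp only [hper _] at h
      rw [h]; norm_num
    rw [hshift, add_comm]
    exact intervalIntegral.integral_add_adjacent_intervals (hintf _ _) (hintf _ _)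

lemma Lop_eq (p K κ : ℝ) (hκ0 : 0 < κ) (hκ : κ < 1/2) (φ : ℝ → ℝ) (hφ : Continuous φ)
    (hper : Function.Periodic φ 1) (x : ℝ) (hx : x ∈ Icc (0:ℝ) 1) :
    Lop p K κ φ x = p * (∫ y in (0:ℝ)..1, φ y) - p * φ x
      - 2 * K * (∫ y in (x - κ)..(x + κ), φ y) + 4 * K * κ * φ x := by
  have hmeas := hE_meas κ x
  have hint1 : IntegrableOn (fun y => φ y - φ x) (Icc (0:ℝ) 1) volume :=
    (hφ.sub continuous_const).integrableOn_Icc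
  have hW2eq : ∀ c : ℝ → ℝ, (fun y => W2 κ x y * c y)
      = ({y : ℝ | |x - y| ≤ κ ∨ 1 - κ ≤ |x - y|}).indicator c := fun c => funext (W2_mul κ x c)
  have hint2 : IntegrableOn (fun y => W2 κ x y * φ y) (Icc (0:ℝ) 1) volume := by
    rw [hW2eq]; exact (hφ.integrableOn_Icc).indicator hmeas
  have hint3 : IntegrableOn (fun y => W2 κ x y * (1:ℝ)) (Icc (0:ℝ) 1) volume := by
    rw [hW2eq]; exact (continuous_const.integrableOn_Icc).indicator hmeas
  have hsplit : ∀ y : ℝ, (p - 2 * K * W2 κ x y) * (φ y - φ x)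
      = p * (φ y - φ x) - 2 * K * (W2 κ x y * φ y) + (2 * K * φ x) * (W2 κ x y * 1) := by
    intro y; ring
  unfold Lop
  simp only [hsplit]
  rw [integral_add (by exact (hint1.const_mul p).sub (hint2.const_mul (2*K)))
      (hint3.const_mul _),
    integral_sub (hint1.const_mul p) (hint2.const_mul (2*K)),
    integral_const_mul, integral_const_mul, integral_const_mul]
  rw [key κ hκ0 hκ φ hφ hper x hx,
      key κ hκ0 hκ (fun _ => (1:ℝ)) continuous_const (fun _ => rfl) x hx]
  have h1 : ∫ y in (x - κ)..(x + κ), (1:ℝ) = 2 * κ := by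
    simp; ring
  have h2 : ∫ y in Icc (0:ℝ) 1, (φ y - φ x) = (∫ y in (0:ℝ)..1, φ y) - φ x := by
    rw [integral_sub (hφ.integrableOn_Icc) (continuous_const.integrableOn_Icc)]
    rw [integral_Icc_eq_integral_Ioc, ← intervalIntegral.integral_of_le (by norm_num : (0:ℝ) ≤ 1)]
    simp
  rw [h1, h2]; ring

lemma int_cos' {c a b : ℝ} (hc : c ≠ 0) :
    ∫ y in a..b, Real.cos (c * y) = c⁻¹ * (Real.sin (c * b) - Real.sin (c * a)) := by
  rw [intervalIntegral.integral_comp_mul_left (fun t => Real.cos t) hc, integral_cos, smul_eq_mul]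

lemma int_sin' {c a b : ℝ} (hc : c ≠ 0) :
    ∫ y in a..b, Real.sin (c * y) = c⁻¹ * (Real.cos (c * a) - Real.cos (c * b)) := by
  rw [intervalIntegral.integral_comp_mul_left (fun t => Real.sin t) hc, integral_sin, smul_eq_mul]

lemma per_cos (ℓ : ℕ) : Function.Periodic (fun y => Real.cos (2 * π * ℓ * y)) 1 := by
  intro y
  simp only []
  rw [show 2 * π * (ℓ:ℝ) * (y + 1) = 2 * π * ℓ * y + ℓ * (2 * π) by ring,
    Real.cos_add_nat_mul_two_pi]

lemma per_sin (ℓ : ℕ) : Function.Periodic (fun y => Real.sin (2 * π * ℓ * y)) 1 := by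
  intro y
  simp only []
  rw [show 2 * π * (ℓ:ℝ) * (y + 1) = 2 * π * ℓ * y + ℓ * (2 * π) by ring,
    Real.sin_add_nat_mul_two_pi]

lemma sin_two_pi_nat (ℓ : ℕ) : Real.sin (2 * π * ℓ) = 0 := by
  have := Real.sin_nat_mul_pi (2 * ℓ)
  push_cast at this
  rw [show 2 * π * (ℓ:ℝ) = 2 * ℓ * π by ring]
  exact this

lemma cos_two_pi_nat (ℓ : ℕ) : Real.cos (2 * π * ℓ) = 1 := by
  have := Real.cos_nat_mul_two_pi ℓ
  rw [show 2 * π * (ℓ:ℝ) = ℓ * (2 * π) by ring]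
  exact this

/-- The constant function `1` is an eigenfunction of `𝓛` for the eigenvalue `0`, and
`cos(2πℓx)`, `sin(2πℓx)` are eigenfunctions for the eigenvalue
`λ_ℓ = 4Kκ - p - (2K/(πℓ)) sin(2πℓκ)`, for every integer `ℓ ≥ 1`. -/
theorem Lop_eigenfunctions
    (κ p K : ℝ) (hκ : κ ∈ Set.Ioo (0:ℝ) (1/2)) (hp : 0 < p) :
    (∀ x ∈ Set.Icc (0:ℝ) 1, Lop p K κ (fun _ => 1) x = 0) ∧
    (∀ ℓ : ℕ, 1 ≤ ℓ → ∀ x ∈ Set.Icc (0:ℝ) 1,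
      Lop p K κ (fun y => Real.cos (2 * π * ℓ * y)) x
        = (4 * K * κ - p - (2 * K / (π * ℓ)) * Real.sin (2 * π * ℓ * κ))
            * Real.cos (2 * π * ℓ * x)) ∧
    (∀ ℓ : ℕ, 1 ≤ ℓ → ∀ x ∈ Set.Icc (0:ℝ) 1,
      Lop p K κ (fun y => Real.sin (2 * π * ℓ * y)) x
        = (4 * K * κ - p - (2 * K / (π * ℓ)) * Real.sin (2 * π * ℓ * κ))
            * Real.sin (2 * π * ℓ * x)) := by
  obtain ⟨hκ0, hκ2⟩ := hκ
  refine ⟨?_, ?_, ?_⟩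
  · intro x hx
    rw [Lop_eq p K κ hκ0 hκ2 _ continuous_const (fun _ => rfl) x hx]
    simp
    ring
  · intro ℓ hℓ x hx
    have hℓ' : (1:ℝ) ≤ (ℓ:ℝ) := by exact_mod_cast hℓ
    have hπ := Real.pi_pos
    have hc : (2 * π * (ℓ:ℝ)) ≠ 0 := by positivity
    rw [Lop_eq p K κ hκ0 hκ2 _ (by continuity) (per_cos ℓ) x hx]
    simp only [int_cos' hc]
    have hdiff : Real.sin (2 * π * (ℓ:ℝ) * (x + κ)) - Real.sin (2 * π * (ℓ:ℝ) * (x - κ))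
        = 2 * Real.cos (2 * π * ℓ * x) * Real.sin (2 * π * ℓ * κ) := by
      rw [show 2 * π * (ℓ:ℝ) * (x + κ) = 2 * π * ℓ * x + 2 * π * ℓ * κ by ring,
        show 2 * π * (ℓ:ℝ) * (x - κ) = 2 * π * ℓ * x - 2 * π * ℓ * κ by ring,
        Real.sin_add, Real.sin_sub]
      ring
    rw [hdiff, mul_one, mul_zero, Real.sin_zero, sin_two_pi_nat ℓ]
    have hπℓ : π * (ℓ:ℝ) ≠ 0 := by positivity
    field_simp
    ring
  · intro ℓ hℓ x hx
    have hℓ' : (1:ℝ) ≤ (ℓ:ℝ) := by exact_mod_cast hℓ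
    have hπ := Real.pi_pos
    have hc : (2 * π * (ℓ:ℝ)) ≠ 0 := by positivity
    rw [Lop_eq p K κ hκ0 hκ2 _ (by continuity) (per_sin ℓ) x hx]
    simp only [int_sin' hc]
    have hdiff : Real.cos (2 * π * (ℓ:ℝ) * (x - κ)) - Real.cos (2 * π * (ℓ:ℝ) * (x + κ))
        = 2 * Real.sin (2 * π * ℓ * x) * Real.sin (2 * π * ℓ * κ) := by
      rw [show 2 * π * (ℓ:ℝ) * (x + κ) = 2 * π * ℓ * x + 2 * π * ℓ * κ by ring,
        show 2 * π * (ℓ:ℝ) * (x - κ) = 2 * π * ℓ * x - 2 * π * ℓ * κ by ring,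
        Real.cos_add, Real.cos_sub]
      ring
    rw [hdiff, mul_one, mul_zero, Real.cos_zero, cos_two_pi_nat ℓ]
    have hπℓ : π * (ℓ:ℝ) ≠ 0 := by positivity
    field_simp
    ring
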